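/- arXiv:2503.08255 — 2 statements merged into one kernel-verified Lean document; each statement's English description precedes it below -/
import Mathlib

section
/- For any unit vector α ∈ ℝ³ and any θ ∈ ℝ with cos θ ≠ −1, the determinant of the matrix E at the Rodrigues matrix is det(E(R(α,θ))) = √((1 + cos θ)/2); in particular E(R(α,θ)) is invertible. -/
open Matrix

noncomputable section

/-- The cross (hat) map: `x^×` with `x^× y = x × y`. -/
def cross3 (x : Fin 3 → ℝ) : Matrix (Fin 3) (Fin 3) ℝ :=
  !![0, -x 2, x 1; x 2, 0, -x 0; -x 1, x 0, 0]

/-- The vee map: `A∨ = (A₃₂, A₁₃, A₂₁)`. -/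
def vee3 (A : Matrix (Fin 3) (Fin 3) ℝ) : Fin 3 → ℝ :=
  ![A 2 1, A 0 2, A 1 0]

/-- The Rodrigues matrix `R(α,θ) = I + sin θ · α^× + (1-cos θ) · α^×α^×`. -/
def rod (α : Fin 3 → ℝ) (θ : ℝ) : Matrix (Fin 3) (Fin 3) ℝ :=
  1 + Real.sin θ • cross3 α + (1 - Real.cos θ) • (cross3 α * cross3 α)

/-- The error vector `ψ(R) = ½(R - Rᵀ)∨`. -/
def psi3 (R : Matrix (Fin 3) (Fin 3) ℝ) : Fin 3 → ℝ :=
  (1 / 2 : ℝ) • vee3 (R - Rᵀ)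

/-- The generalized error vector `e_R(R) = (1/√(1+tr R)) (R - Rᵀ)∨`. -/
def eR (R : Matrix (Fin 3) (Fin 3) ℝ) : Fin 3 → ℝ :=
  (1 / Real.sqrt (1 + R.trace)) • vee3 (R - Rᵀ)

/-- `E_c(R) = ½((tr R)·I - Rᵀ)`. -/
def Ec (R : Matrix (Fin 3) (Fin 3) ℝ) : Matrix (Fin 3) (Fin 3) ℝ :=
  (1 / 2 : ℝ) • (R.trace • (1 : Matrix (Fin 3) (Fin 3) ℝ) - Rᵀ)

/-- `E(R) = (1/√(1+tr R))(2E_c(R) + ½ e_R e_Rᵀ)`. -/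
def Emat (R : Matrix (Fin 3) (Fin 3) ℝ) : Matrix (Fin 3) (Fin 3) ℝ :=
  (1 / Real.sqrt (1 + R.trace)) •
    ((2 : ℝ) • Ec R + (1 / 2 : ℝ) • vecMulVec (eR R) (eR R))

lemma trace_rod (α : Fin 3 → ℝ) (hα : α 0 ^ 2 + α 1 ^ 2 + α 2 ^ 2 = 1) (θ : ℝ) :
    (rod α θ).trace = 1 + 2 * Real.cos θ := by
  simp [rod, trace, cross3, Fin.sum_univ_three, Matrix.mul_apply, Matrix.one_apply]
  linear_combination (2 * Real.cos θ - 2) * hα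

lemma rod_sub_transpose (α : Fin 3 → ℝ) (θ : ℝ) :
    rod α θ - (rod α θ)ᵀ = (2 * Real.sin θ) • cross3 α := by
  ext i j
  fin_cases i <;> fin_cases j <;>
    (simp [rod, cross3, Matrix.mul_apply, Matrix.one_apply, Matrix.transpose_apply,
      Matrix.vecHead, Matrix.vecTail, Fin.sum_univ_three]; try ring)

lemma vee3_rod (α : Fin 3 → ℝ) (θ : ℝ) :
    vee3 (rod α θ - (rod α θ)ᵀ) = (2 * Real.sin θ) • α := by
  rw [rod_sub_transpose]
  funext i
  fin_cases i <;> simp [vee3, cross3]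

lemma eR_rod (α : Fin 3 → ℝ) (hα : α 0 ^ 2 + α 1 ^ 2 + α 2 ^ 2 = 1) (θ : ℝ) :
    eR (rod α θ) =
      (2 * Real.sin θ / Real.sqrt (2 * (1 + Real.cos θ))) • α := by
  have htr : (1 : ℝ) + (rod α θ).trace = 2 * (1 + Real.cos θ) := by
    rw [trace_rod α hα]; ring
  rw [eR, htr, vee3_rod]
  funext i
  simp [smul_smul]
  ring

lemma vecmul_step (α : Fin 3 → ℝ) (θ : ℝ) (hθ : Real.cos θ ≠ -1) :
    (1/2 : ℝ) • vecMulVec ((2 * Real.sin θ / Real.sqrt (2 * (1 + Real.cos θ))) • α)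
      ((2 * Real.sin θ / Real.sqrt (2 * (1 + Real.cos θ))) • α)
      = (1 - Real.cos θ) • vecMulVec α α := by
  have hc : 0 < 1 + Real.cos θ := by
    rcases lt_or_eq_of_le (Real.neg_one_le_cos θ) with h | h
    · linarith
    · exact absurd h.symm hθ
  have h2c : (0:ℝ) < 2 * (1 + Real.cos θ) := by linarith
  have hs2 : Real.sqrt (2 * (1 + Real.cos θ)) ^ 2 = 2 * (1 + Real.cos θ) :=
    Real.sq_sqrt h2c.le
  have hsin : Real.sin θ ^ 2 = 1 - Real.cos θ ^ 2 := Real.sin_sq θ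
  have key : (2 * Real.sin θ / Real.sqrt (2 * (1 + Real.cos θ)))^2
      = 2 * (1 - Real.cos θ) := by
    rw [div_pow, hs2, div_eq_iff h2c.ne']
    linear_combination 4 * hsin
  ext i j
  simp only [Matrix.smul_apply, vecMulVec_apply, Pi.smul_apply, smul_eq_mul]
  linear_combination (1/2 * α i * α j) * key

lemma Ec_step (α : Fin 3 → ℝ) (hα : α 0 ^ 2 + α 1 ^ 2 + α 2 ^ 2 = 1) (θ : ℝ) :
    (2 : ℝ) • Ec (rod α θ) + (1 - Real.cos θ) • vecMulVec α α
      = (1 + Real.cos θ) • (1 : Matrix (Fin 3) (Fin 3) ℝ) + Real.sin θ • cross3 α := by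
  ext i j
  fin_cases i <;> fin_cases j <;>
    (simp [Ec, trace_rod α hα, rod, vecMulVec_apply, cross3, Matrix.one_apply,
      Matrix.transpose_apply, Matrix.vecHead, Matrix.vecTail, Matrix.mul_apply,
      Fin.sum_univ_three];
     try ring;
     try linear_combination (1 - Real.cos θ) * hα;
     try linear_combination (Real.cos θ - 1) * hα)

lemma Emat_rod (α : Fin 3 → ℝ) (hα : α 0 ^ 2 + α 1 ^ 2 + α 2 ^ 2 = 1) (θ : ℝ)
    (hθ : Real.cos θ ≠ -1) :
    Emat (rod α θ) = (1 / Real.sqrt (2 * (1 + Real.cos θ))) •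
      ((1 + Real.cos θ) • (1 : Matrix (Fin 3) (Fin 3) ℝ) + Real.sin θ • cross3 α) := by
  have htr : (1 : ℝ) + (rod α θ).trace = 2 * (1 + Real.cos θ) := by
    rw [trace_rod α hα]; ring
  rw [Emat, htr, eR_rod α hα, vecmul_step α θ hθ, Ec_step α hα]


/-- determinant of `E` at the Rodrigues matrix, hence invertibility. -/
theorem Emat_rodrigues_det (α : Fin 3 → ℝ)
    (hα : α 0 ^ 2 + α 1 ^ 2 + α 2 ^ 2 = 1) (θ : ℝ) (hθ : Real.cos θ ≠ -1) :
    (Emat (rod α θ)).det = Real.sqrt ((1 + Real.cos θ) / 2) ∧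
      IsUnit (Emat (rod α θ)) := by
  have hc : 0 < 1 + Real.cos θ := by
    rcases lt_or_eq_of_le (Real.neg_one_le_cos θ) with h | h
    · linarith
    · exact absurd h.symm hθ
  have h2c : (0:ℝ) < 2 * (1 + Real.cos θ) := by linarith
  have hs2 : Real.sqrt (2 * (1 + Real.cos θ)) ^ 2 = 2 * (1 + Real.cos θ) :=
    Real.sq_sqrt h2c.le
  have hspos : 0 < Real.sqrt (2 * (1 + Real.cos θ)) := Real.sqrt_pos.mpr h2c
  have hsin : Real.sin θ ^ 2 = 1 - Real.cos θ ^ 2 := Real.sin_sq θ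
  have hdetN : ((1 + Real.cos θ) • (1 : Matrix (Fin 3) (Fin 3) ℝ)
      + Real.sin θ • cross3 α).det = 2 * (1 + Real.cos θ)^2 := by
    rw [Matrix.det_fin_three]
    simp [Matrix.add_apply, Matrix.smul_apply, Matrix.one_apply, cross3, smul_eq_mul]
    linear_combination ((1 + Real.cos θ) * Real.sin θ^2) * hα + (1 + Real.cos θ) * hsin
  have hq : Real.sqrt ((1 + Real.cos θ)/2) * Real.sqrt (2 * (1 + Real.cos θ))
      = 1 + Real.cos θ := by
    rw [← Real.sqrt_mul (by positivity),
      show (1 + Real.cos θ)/2 * (2*(1 + Real.cos θ)) = (1 + Real.cos θ)^2 by ring,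
      Real.sqrt_sq hc.le]
  have hdet : (Emat (rod α θ)).det = Real.sqrt ((1 + Real.cos θ) / 2) := by
    rw [Emat_rod α hα θ hθ, Matrix.det_smul, hdetN]
    have hcard : Fintype.card (Fin 3) = 3 := by simp
    rw [hcard]
    set s := Real.sqrt (2 * (1 + Real.cos θ)) with hs
    set q := Real.sqrt ((1 + Real.cos θ)/2) with hqdef
    calc (1/s)^3 * (2*(1 + Real.cos θ)^2)
        = (2*(1 + Real.cos θ)^2) / (s^2 * s) := by ring
      _ = (2*(1 + Real.cos θ)^2) / ((2*(1 + Real.cos θ)) * s) := by rw [hs2]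
      _ = (1 + Real.cos θ) / s := by
          rw [div_eq_div_iff (by positivity) hspos.ne']; ring
      _ = q := by rw [div_eq_iff hspos.ne']; linear_combination -hq
  refine ⟨hdet, ?_⟩
  rw [Matrix.isUnit_iff_isUnit_det, hdet, isUnit_iff_ne_zero]
  have : 0 < Real.sqrt ((1 + Real.cos θ)/2) := Real.sqrt_pos.mpr (by linarith)
  exact this.ne'
end
end

section
/- Let R̃ ∈ SO(3) with tr R̃ ≠ −1, and let Q₁, Q₂ ∈ ℝ^{3×3} be symmetric positive definite. Then the 6×6 block-diagonal matrix Q_G(R̃) := blkdiag(E(R̃)·Q₁·E(R̃)ᵀ, Q₂) is symmetric positive definite. -/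
/-!
Write `t = tr R` and `a = (R - Rᵀ)∨`, so that `R - Rᵀ = a^×`. Since `adj R = Rᵀ`, Cayley–Hamilton
reads `R² = t R - t I + Rᵀ`; combined with `(a^×)² = a aᵀ - |a|² I` this gives
`(1 + t)(R + Rᵀ) = a aᵀ + (2 + 2t - |a|²) I`. Taking traces, `|a|² = (3 - t)(1 + t)`, so
`tr R ≤ 3` forces `1 + t > 0`, and then `R a = a`. These identities collapse `E(R) E(R)ᵀ` to
`I - a aᵀ / (4(1 + t))`, which is positive definite because `|a|² / (4(1 + t)) = (3 - t)/4 < 1`.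
Hence `E(R)` is invertible, `E(R) Q₁ E(R)ᵀ` is positive definite, and so is the block matrix.
-/

open Matrix

noncomputable section

lemma Matrix.transpose_eq_adjugate_of_transpose_mul_self {n α : Type*} [Fintype n]
    [DecidableEq n] [CommRing α] {R : Matrix n n α} (hR : Rᵀ * R = 1) (hdet : R.det = 1) :
    Rᵀ = adjugate R :=
  calc Rᵀ = Rᵀ * (R * adjugate R) := by rw [mul_adjugate, hdet, one_smul, mul_one]
    _ = adjugate R := by rw [← mul_assoc, hR, one_mul]

lemma Matrix.adjugate_fin_three_eq_mul_self_sub_trace_smul (A : Matrix (Fin 3) (Fin 3) ℝ) :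
    adjugate A = A * A - A.trace • A + ((A.trace ^ 2 - (A * A).trace) / 2) • 1 := by
  rw [adjugate_fin_three]
  ext i j
  fin_cases i <;> fin_cases j <;>
    simp [mul_apply, trace, Fin.sum_univ_three] <;> ring

lemma Matrix.trace_le_card_of_mul_transpose_self {n : Type*} [Fintype n] [DecidableEq n]
    {R : Matrix n n ℝ} (hR : R * Rᵀ = 1) : R.trace ≤ Fintype.card n := by
  have hdiag (i : n) : R i i ≤ 1 := by
    have hrow : ∑ j, R i j ^ 2 = 1 := by
      simpa [mul_apply, sq] using congr($hR i i)
    have : R i i ^ 2 ≤ 1 :=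
      hrow ▸ Finset.single_le_sum (fun j _ => sq_nonneg (R i j)) (Finset.mem_univ i)
    nlinarith
  simpa [trace] using Finset.sum_le_sum fun i (_ : i ∈ Finset.univ) => hdiag i

lemma Matrix.PosDef.fromBlocks_zero {m n 𝕜 : Type*} [Fintype m] [Fintype n] [CommRing 𝕜]
    [PartialOrder 𝕜] [StarRing 𝕜] [IsOrderedAddMonoid 𝕜]
    {A : Matrix m m 𝕜} {D : Matrix n n 𝕜} (hA : A.PosDef) (hD : D.PosDef) :
    (fromBlocks A 0 0 D).PosDef := by
  refine .of_dotProduct_mulVec_pos (hA.isHermitian.fromBlocks (by simp) hD.isHermitian)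
    fun x hx => ?_
  have hsplit : star x ⬝ᵥ (fromBlocks A 0 0 D *ᵥ x) =
      star (x ∘ Sum.inl) ⬝ᵥ (A *ᵥ (x ∘ Sum.inl)) +
        star (x ∘ Sum.inr) ⬝ᵥ (D *ᵥ (x ∘ Sum.inr)) := by
    simp [fromBlocks_mulVec, dotProduct, Fintype.sum_sum_type, Function.comp_def]
  rw [hsplit]
  by_cases hl : x ∘ Sum.inl = 0
  · have hr : x ∘ Sum.inr ≠ 0 := fun hr => hx (Sum.elim_comp_inl_inr x ▸ by simp [hl, hr])
    exact add_pos_of_nonneg_of_pos (by simp [hl]) (hD.dotProduct_mulVec_pos hr)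
  · exact add_pos_of_pos_of_nonneg (hA.dotProduct_mulVec_pos hl)
      (hD.posSemidef.dotProduct_mulVec_nonneg _)

lemma Matrix.posDef_one_sub_smul_vecMulVec {n : Type*} [Fintype n] [DecidableEq n]
    (v : n → ℝ) {c : ℝ} (hc₀ : 0 ≤ c) (hc : c * (v ⬝ᵥ v) < 1) :
    (1 - c • vecMulVec v v).PosDef := by
  refine .of_dotProduct_mulVec_pos ?_ fun x hx => ?_
  · simp [IsHermitian, transpose_vecMulVec]
  have hform : star x ⬝ᵥ ((1 - c • vecMulVec v v) *ᵥ x) = x ⬝ᵥ x - c * (v ⬝ᵥ x) ^ 2 := by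
    simp [sub_mulVec, smul_mulVec, vecMulVec_mulVec, dotProduct_comm x v, sq]
  have hCS : (v ⬝ᵥ x) ^ 2 ≤ (v ⬝ᵥ v) * (x ⬝ᵥ x) := by
    simpa [dotProduct, sq] using Finset.sum_mul_sq_le_sq_mul_sq Finset.univ v x
  have hx' : 0 < x ⬝ᵥ x := by
    simpa using dotProduct_self_star_pos_iff.mpr hx
  rw [hform]
  nlinarith [mul_le_mul_of_nonneg_left hCS hc₀]

def rotAxis (R : Matrix (Fin 3) (Fin 3) ℝ) : Fin 3 → ℝ :=
  vee3 (R - Rᵀ)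

lemma cross3_rotAxis (R : Matrix (Fin 3) (Fin 3) ℝ) : cross3 (rotAxis R) = R - Rᵀ := by
  ext i j
  fin_cases i <;> fin_cases j <;> simp [cross3, rotAxis, vee3]

lemma cross3_mulVec_self (v : Fin 3 → ℝ) : cross3 v *ᵥ v = 0 := by
  ext i
  fin_cases i <;> simp [cross3, mulVec, dotProduct, Fin.sum_univ_three] <;> ring

lemma cross3_mul_self (v : Fin 3 → ℝ) :
    cross3 v * cross3 v = vecMulVec v v - (v ⬝ᵥ v) • 1 := by
  ext i j
  fin_cases i <;> fin_cases j <;>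
    simp [cross3, vecMulVec_apply, mul_apply, dotProduct, Fin.sum_univ_three, one_apply] <;> ring

lemma transpose_mulVec_rotAxis (R : Matrix (Fin 3) (Fin 3) ℝ) :
    Rᵀ *ᵥ rotAxis R = R *ᵥ rotAxis R := by
  have := cross3_mulVec_self (rotAxis R)
  rw [cross3_rotAxis, sub_mulVec, sub_eq_zero] at this
  exact this.symm

lemma Emat_eq {R : Matrix (Fin 3) (Fin 3) ℝ} (h : 0 < 1 + R.trace) :
    Emat R = (√(1 + R.trace))⁻¹ • (R.trace • 1 - Rᵀ +
      (2 * (1 + R.trace))⁻¹ • vecMulVec (rotAxis R) (rotAxis R)) := by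
  have heR : eR R = (√(1 + R.trace))⁻¹ • rotAxis R := by simp [eR, rotAxis]
  have hsq : (√(1 + R.trace))⁻¹ * (√(1 + R.trace))⁻¹ = (1 + R.trace)⁻¹ := by
    rw [← mul_inv, Real.mul_self_sqrt h.le]
  rw [Emat, Ec, heR, smul_vecMulVec, vecMulVec_smul, smul_smul (√(1 + R.trace))⁻¹, hsq]
  match_scalars <;> field_simp

namespace SO3

variable {R : Matrix (Fin 3) (Fin 3) ℝ} (hR : Rᵀ * R = 1) (hdet : R.det = 1)
include hR hdet

lemma mul_self_eq : R * R = R.trace • R - R.trace • 1 + Rᵀ := by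
  have hadj : Rᵀ = R * R - R.trace • R + ((R.trace ^ 2 - (R * R).trace) / 2) • 1 := by
    rw [transpose_eq_adjugate_of_transpose_mul_self hR hdet,
      adjugate_fin_three_eq_mul_self_sub_trace_smul]
  have htr : (R * R).trace = R.trace ^ 2 - 2 * R.trace := by
    have := congrArg trace hadj
    simp only [trace_transpose, trace_add, trace_sub, trace_smul, trace_one, smul_eq_mul,
      Fintype.card_fin] at this
    linarith
  rw [hadj, htr]
  match_scalars <;> ring

lemma one_add_trace_smul_add_transpose (hR' : R * Rᵀ = 1) :
    (1 + R.trace) • (R + Rᵀ) =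
      vecMulVec (rotAxis R) (rotAxis R) + (2 + 2 * R.trace - rotAxis R ⬝ᵥ rotAxis R) • 1 := by
  have hsq : (R - Rᵀ) * (R - Rᵀ) = R * R + Rᵀ * Rᵀ - 2 • 1 := by
    rw [show (R - Rᵀ) * (R - Rᵀ) = R * R - R * Rᵀ - Rᵀ * R + Rᵀ * Rᵀ by noncomm_ring, hR, hR']
    abel
  have hsqT : Rᵀ * Rᵀ = R.trace • Rᵀ - R.trace • 1 + R := by
    simpa [transpose_mul] using congrArg transpose (mul_self_eq hR hdet)
  rw [← cross3_rotAxis, cross3_mul_self, mul_self_eq hR hdet, hsqT] at hsq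
  linear_combination (norm := module) -hsq

lemma rotAxis_dotProduct_self (hR' : R * Rᵀ = 1) :
    rotAxis R ⬝ᵥ rotAxis R = (3 - R.trace) * (1 + R.trace) := by
  have := congrArg trace (one_add_trace_smul_add_transpose hR hdet hR')
  simp only [trace_smul, trace_add, trace_transpose, trace_vecMulVec, trace_one, smul_eq_mul,
    Fintype.card_fin] at this
  push_cast at this
  linarith

lemma one_add_trace_pos (hR' : R * Rᵀ = 1) (htr : R.trace ≠ -1) : 0 < 1 + R.trace := by
  have hle : R.trace ≤ 3 := by simpa using trace_le_card_of_mul_transpose_self hR'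
  have hnonneg : 0 ≤ (3 - R.trace) * (1 + R.trace) :=
    rotAxis_dotProduct_self hR hdet hR' ▸ dotProduct_self_star_nonneg (rotAxis R)
  rcases lt_or_gt_of_ne htr with hlt | hgt
  · nlinarith
  · linarith

lemma add_transpose_eq (hR' : R * Rᵀ = 1) (htr : R.trace ≠ -1) :
    R + Rᵀ = (R.trace - 1) • 1 + (1 + R.trace)⁻¹ • vecMulVec (rotAxis R) (rotAxis R) := by
  have hpos := one_add_trace_pos hR hdet hR' htr
  have h := one_add_trace_smul_add_transpose hR hdet hR'
  rw [rotAxis_dotProduct_self hR hdet hR'] at h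
  rw [← inv_smul_smul₀ hpos.ne' (R + Rᵀ), h]
  match_scalars
  · field_simp
  · field_simp
    ring

lemma mulVec_rotAxis (hR' : R * Rᵀ = 1) (htr : R.trace ≠ -1) : R *ᵥ rotAxis R = rotAxis R := by
  have hpos := one_add_trace_pos hR hdet hR' htr
  -- `Rᵀ a = R a`, so applying `add_transpose_eq` to `a` gives `2 R a = 2 a`.
  have h := congrArg (· *ᵥ rotAxis R) (add_transpose_eq hR hdet hR' htr)
  simp only [add_mulVec, transpose_mulVec_rotAxis, smul_mulVec, one_mulVec, vecMulVec_mulVec,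
    op_smul_eq_smul, rotAxis_dotProduct_self hR hdet hR'] at h
  have h2 : (2 : ℝ) • (R *ᵥ rotAxis R) = (2 : ℝ) • rotAxis R := by
    rw [two_smul, h, smul_smul]
    match_scalars
    field_simp
    ring
  exact smul_right_injective _ two_ne_zero h2

lemma Emat_mul_transpose (hR' : R * Rᵀ = 1) (htr : R.trace ≠ -1) :
    Emat R * (Emat R)ᵀ = 1 - (4 * (1 + R.trace))⁻¹ • vecMulVec (rotAxis R) (rotAxis R) := by
  have hpos := one_add_trace_pos hR hdet hR' htr
  have hRa := mulVec_rotAxis hR hdet hR' htr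
  set a := rotAxis R
  set c := (2 * (1 + R.trace))⁻¹
  have hRV : Rᵀ * vecMulVec a a = vecMulVec a a := by
    rw [mul_vecMulVec, transpose_mulVec_rotAxis, hRa]
  have hVR : vecMulVec a a * R = vecMulVec a a := by
    rw [vecMulVec_mul, ← mulVec_transpose, transpose_mulVec_rotAxis, hRa]
  have hVV : vecMulVec a a * vecMulVec a a = (a ⬝ᵥ a) • vecMulVec a a := by
    rw [vecMulVec_mul_vecMulVec, vecMulVec_smul]
  have hexp : (R.trace • 1 - Rᵀ + c • vecMulVec a a) * (R.trace • 1 - R + c • vecMulVec a a) =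
      (R.trace * R.trace) • 1 - R.trace • (R + Rᵀ) + Rᵀ * R + (2 * R.trace * c) • vecMulVec a a
        - c • (Rᵀ * vecMulVec a a) - c • (vecMulVec a a * R)
        + (c * c) • (vecMulVec a a * vecMulVec a a) := by
    simp only [add_mul, mul_add, sub_mul, mul_sub, smul_mul_assoc, mul_smul_comm, one_mul,
      mul_one, smul_smul, smul_add]
    module
  have hsq : (√(1 + R.trace))⁻¹ * (√(1 + R.trace))⁻¹ = (1 + R.trace)⁻¹ := by
    rw [← mul_inv, Real.mul_self_sqrt hpos.le]
  rw [Emat_eq hpos, transpose_smul, smul_mul_smul_comm, hsq, transpose_add, transpose_sub,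
    transpose_smul, transpose_smul, transpose_one, transpose_transpose, transpose_vecMulVec,
    hexp, hR, hRV, hVR, hVV, add_transpose_eq hR hdet hR' htr, rotAxis_dotProduct_self hR hdet hR']
  simp only [c]
  match_scalars <;> field_simp <;> ring

lemma isUnit_Emat (hR' : R * Rᵀ = 1) (htr : R.trace ≠ -1) : IsUnit (Emat R) := by
  have hpos := one_add_trace_pos hR hdet hR' htr
  have hEEt : (Emat R * (Emat R)ᵀ).PosDef := by
    rw [Emat_mul_transpose hR hdet hR' htr]
    refine posDef_one_sub_smul_vecMulVec _ (by positivity) ?_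
    rw [rotAxis_dotProduct_self hR hdet hR', ← div_eq_inv_mul, div_lt_one (by positivity)]
    nlinarith
  have hdetE := (isUnit_iff_isUnit_det _).mp hEEt.isUnit
  rw [det_mul, det_transpose] at hdetE
  exact (isUnit_iff_isUnit_det _).mpr (isUnit_of_mul_isUnit_left hdetE)

end SO3

/-- `Q_G(R̃)` is symmetric positive definite when `tr R̃ ≠ -1`. -/
theorem QG_posDef (Rt : Matrix (Fin 3) (Fin 3) ℝ)
    (hR1 : Rtᵀ * Rt = 1) (hR2 : Rt * Rtᵀ = 1) (hR3 : Rt.det = 1)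
    (htr : Rt.trace ≠ -1)
    (Q₁ Q₂ : Matrix (Fin 3) (Fin 3) ℝ) (hQ₁ : Q₁.PosDef) (hQ₂ : Q₂.PosDef) :
    (Matrix.fromBlocks (Emat Rt * Q₁ * (Emat Rt)ᵀ) 0 0 Q₂).IsSymm ∧
      (Matrix.fromBlocks (Emat Rt * Q₁ * (Emat Rt)ᵀ) 0 0 Q₂).PosDef := by
  have hE := SO3.isUnit_Emat hR1 hR3 hR2 htr
  have hEQE : (Emat Rt * Q₁ * (Emat Rt)ᵀ).PosDef :=
    (IsUnit.posDef_star_right_conjugate_iff hE).mpr hQ₁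
  have hQG := hEQE.fromBlocks_zero hQ₂
  exact ⟨isHermitian_iff_isSymm.mp hQG.isHermitian, hQG⟩
end
end
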